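/- Let R be a semiartinian von Neumann regular ring with primitive factors artinian. Then the class of layer projective right R-modules is closed under submodules. -/

import Mathlib

universe u

open Submodule

/-- The socle of a module: the supremum of all simple submodules. -/
noncomputable def socle (R : Type u) [Ring R] (M : Type u) [AddCommGroup M] [Module R M] :
    Submodule R M :=
  sSup {S : Submodule R M | IsAtom S}

/-- The Loewy (socle) sequence of a module, defined by transfinite recursion:
`loewy R M 0 = ⊥`, `loewy R M (α+1) / loewy R M α = Soc (M ⧸ loewy R M α)`, and unions
at limit ordinals. -/
noncomputable def loewy (R : Type u) [Ring R] (M : Type u) [AddCommGroup M] [Module R M]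
    (o : Ordinal.{u}) : Submodule R M :=
  o.limitRecOn ⊥ (fun _ N => (socle R (M ⧸ N)).comap N.mkQ)
    (fun o _ IH => ⨆ (b : Ordinal) (h : b < o), IH b h)

/-- The Loewy length of a module: the least ordinal `o` with `loewy R M o = ⊤`. -/
noncomputable def loewyLength (R : Type u) [Ring R] (M : Type u) [AddCommGroup M]
    [Module R M] : Ordinal.{u} :=
  sInf {o : Ordinal | loewy R M o = ⊤}

/-- A ring is semiartinian if every nonzero module has a nonzero socle. -/
def IsSemiartinianRing (R : Type u) [Ring R] : Prop :=
  ∀ (M : Type u) [AddCommGroup M] [Module R M], Nontrivial M → socle R M ≠ ⊥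

/-- A ring is von Neumann regular if for every `r` there is `s` with `r * s * r = r`. -/
def IsVonNeumannRegularRing (R : Type u) [Ring R] : Prop :=
  ∀ r : R, ∃ s : R, r * s * r = r

/-- `R` has primitive factors artinian: for every primitive ideal `P` (= annihilator of a
simple module), the factor `R/P` is artinian. -/
def HasPrimitiveFactorsArtinian (R : Type u) [Ring R] : Prop :=
  ∀ (M : Type u) [AddCommGroup M] [Module R M], IsSimpleModule R M →
    IsArtinian R (R ⧸ (Module.annihilator R M : Submodule R R))

/-- The `α`-th layer of the Loewy sequence of `R`, as a submodule of `R ⧸ loewy R R α`. -/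
noncomputable def loewyLayer (R : Type u) [Ring R] (α : Ordinal.{u}) :
    Submodule R (R ⧸ loewy R R α) :=
  (loewy R R (α + 1)).map (loewy R R α).mkQ

/-- The canonical projection `π_α : S_{α+1} → S_{α+1}/S_α`. -/
noncomputable def layerProj (R : Type u) [Ring R] (α : Ordinal.{u}) :
    (loewy R R (α + 1) : Submodule R R) →ₗ[R] (loewyLayer R α) :=
  LinearMap.codRestrict _ ((loewy R R α).mkQ.comp (loewy R R (α + 1)).subtype)
    (fun x => ⟨(x : R), x.2, rfl⟩)

/-- `M` is weakly `R`-projective: every homomorphism from `M` to a layer `S_{α+1}/S_α`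
(`0 < α`) with finitely generated image factors through `π_α : S_{α+1} → S_{α+1}/S_α`. -/
def IsWeaklyRProjective (R : Type u) [Ring R] (M : Type u) [AddCommGroup M]
    [Module R M] : Prop :=
  ∀ α : Ordinal.{u}, 0 < α →
    ∀ φ : M →ₗ[R] (loewyLayer R α), (LinearMap.range φ).FG →
      ∃ ψ : M →ₗ[R] (loewy R R (α + 1) : Submodule R R), (layerProj R α).comp ψ = φ

/-- `M` is layer projective: for each `0 < α`, every simple submodule of the `α`-th layer of
`M` is isomorphic to a simple (direct summand) submodule of the `α`-th layer of `R`, i.e. the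
`α`-th layer of `M` is a projective `R/S_α`-module. -/
def IsLayerProjective (R : Type u) [Ring R] (M : Type u) [AddCommGroup M]
    [Module R M] : Prop :=
  ∀ α : Ordinal.{u}, 0 < α →
    ∀ T : Submodule R ((loewy R M (α + 1)).map (loewy R M α).mkQ), IsAtom T →
      ∃ T' : Submodule R (loewyLayer R α), IsAtom T' ∧ Nonempty (T ≃ₗ[R] T')

/-- The submodule `M·S` of `M`, generated by all products `s • m` with `s ∈ S`. -/
def smulSub (R : Type u) [Ring R] (M : Type u) [AddCommGroup M] [Module R M]
    (S : Submodule R R) : Submodule R M :=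
  Submodule.span R {x : M | ∃ s ∈ S, ∃ m : M, s • m = x}

/-! The Loewy sequence of a submodule is the trace of the ambient one,
`loewy R N α = (loewy R M α).comap N.subtype`: at successor steps because the socle is the largest semisimple
submodule, so it commutes with pulling back along injective maps. Hence the `α`-th layer of `N`
embeds into that of `M`, and each simple submodule of it is isomorphic to its image there. -/

section Loewy

variable {R : Type u} [Ring R] {M : Type u} [AddCommGroup M] [Module R M]
  {A B : Type u} [AddCommGroup A] [Module R A] [AddCommGroup B] [Module R B]

lemma isAtom_map_of_injective {f : A →ₗ[R] B} (hf : Function.Injective f)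
    {S : Submodule R A} (hS : IsAtom S) : IsAtom (S.map f) := by
  rw [← isSimpleModule_iff_isAtom] at hS ⊢
  exact .congr (Submodule.equivMapOfInjective f hf S).symm

lemma isSemisimpleModule_socle : IsSemisimpleModule R (socle R M) := by
  rw [socle, sSup_eq_iSup]
  exact isSemisimpleModule_biSup_of_isSemisimpleModule_submodule fun S hS =>
    have : IsSimpleModule R S := isSimpleModule_iff_isAtom.2 hS
    inferInstance

lemma le_socle_iff_isSemisimpleModule {m : Submodule R M} :
    m ≤ socle R M ↔ IsSemisimpleModule R m := by
  refine ⟨fun h => ?_, fun _ => ?_⟩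
  · have := isSemisimpleModule_socle (R := R) (M := M)
    exact .of_injective (Submodule.inclusion h) (Submodule.inclusion_injective h)
  · have hm : (⊤ : Submodule R m).map m.subtype = m := by simp
    rw [← hm, ← IsSemisimpleModule.sSup_simples_eq_top, sSup_eq_iSup, Submodule.map_iSup]
    refine iSup_le fun S => ?_
    rw [Submodule.map_iSup]
    exact iSup_le fun hS => le_sSup <|
      isAtom_map_of_injective m.injective_subtype (isSimpleModule_iff_isAtom.1 hS)

lemma socle_eq_comap_of_injective {f : A →ₗ[R] B} (hf : Function.Injective f) :
    socle R A = (socle R B).comap f := by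
  refine le_antisymm (Submodule.map_le_iff_le_comap.1 ?_) ?_
  · have := isSemisimpleModule_socle (R := R) (M := A)
    exact le_socle_iff_isSemisimpleModule.2 (.congr (Submodule.equivMapOfInjective f hf _).symm)
  · have := le_socle_iff_isSemisimpleModule.1 (Submodule.map_comap_le f (socle R B))
    exact le_socle_iff_isSemisimpleModule.2 (.congr (Submodule.equivMapOfInjective f hf _))

lemma loewy_zero : loewy R M 0 = ⊥ := Ordinal.limitRecOn_zero _ _ _

lemma loewy_succ (o : Ordinal.{u}) :
    loewy R M (o + 1) = (socle R (M ⧸ loewy R M o)).comap (loewy R M o).mkQ := by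
  unfold loewy
  rw [Ordinal.limitRecOn_add_one]

lemma loewy_limit {o : Ordinal.{u}} (h : Order.IsSuccLimit o) :
    loewy R M o = ⨆ (b : Ordinal) (_ : b < o), loewy R M b :=
  Ordinal.limitRecOn_limit _ _ _ _ h

lemma loewy_le_succ (o : Ordinal.{u}) : loewy R M o ≤ loewy R M (o + 1) := by
  intro x hx
  rw [loewy_succ, Submodule.mem_comap, Submodule.mkQ_apply,
    (Submodule.Quotient.mk_eq_zero _).2 hx]
  exact zero_mem _

lemma loewy_mono : Monotone (loewy R M) := by
  intro a b hab
  induction b using Ordinal.limitRecOn with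
  | zero => rw [nonpos_iff_eq_zero.1 hab]
  | add_one o IH =>
    rcases hab.eq_or_lt with rfl | h
    · exact le_rfl
    · exact (IH (Order.lt_add_one_iff.1 h)).trans (loewy_le_succ o)
  | limit o ho IH =>
    rcases hab.eq_or_lt with rfl | h
    · exact le_rfl
    · rw [loewy_limit ho]
      exact le_iSup₂ (f := fun b (_ : b < o) => loewy R M b) a h

lemma Submodule.mapQ_injective_of_eq_comap {p : Submodule R A} {q : Submodule R B}
    (f : A →ₗ[R] B) (h : p = q.comap f) : Function.Injective (p.mapQ q f h.le) := by
  refine LinearMap.ker_eq_bot.1 (Submodule.ker_liftQ_eq_bot _ _ _ ?_)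
  rw [LinearMap.ker_comp, Submodule.ker_mkQ, h]

lemma loewy_eq_comap_of_injective {f : A →ₗ[R] B} (hf : Function.Injective f) (o : Ordinal.{u}) :
    loewy R A o = (loewy R B o).comap f := by
  induction o using Ordinal.limitRecOn with
  | zero => rw [loewy_zero, loewy_zero, Submodule.comap_bot, LinearMap.ker_eq_bot.2 hf]
  | add_one o IH =>
    have hg := Submodule.mapQ_injective_of_eq_comap f IH
    rw [loewy_succ, loewy_succ, socle_eq_comap_of_injective hg, ← Submodule.comap_comp,
      Submodule.mapQ_mkQ, Submodule.comap_comp]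
  | limit o ho IH =>
    have : Nonempty {b : Ordinal // b < o} := ⟨⟨0, ho.pos⟩⟩
    have hdir : Directed (· ≤ ·) fun b : {b : Ordinal // b < o} => loewy R B b :=
      fun b c => ⟨⟨max b c, max_lt b.2 c.2⟩, loewy_mono (le_max_left _ _),
        loewy_mono (le_max_right _ _)⟩
    rw [loewy_limit ho]
    refine le_antisymm (iSup₂_le fun b hb => ?_) fun x hx => ?_
    · rw [IH b hb, loewy_limit ho]
      exact Submodule.comap_mono (le_iSup₂ (f := fun b (_ : b < o) => loewy R B b) b hb)
    · rw [loewy_limit ho, Submodule.mem_comap, iSup_subtype',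
        Submodule.mem_iSup_of_directed _ hdir] at hx
      obtain ⟨⟨b, hb⟩, hxb⟩ := hx
      exact le_iSup₂ (f := fun b (_ : b < o) => loewy R A b) b hb (by rwa [IH b hb])

lemma exists_injective_loewy_layer_map {f : A →ₗ[R] B} (hf : Function.Injective f)
    (α : Ordinal.{u}) : ∃ g : (loewy R A (α + 1)).map (loewy R A α).mkQ →ₗ[R]
      (loewy R B (α + 1)).map (loewy R B α).mkQ, Function.Injective g := by
  have hg := Submodule.mapQ_injective_of_eq_comap f (loewy_eq_comap_of_injective hf α)
  have hmaps : ∀ y ∈ (loewy R A (α + 1)).map (loewy R A α).mkQ,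
      (loewy R A α).mapQ (loewy R B α) f (loewy_eq_comap_of_injective hf α).le y ∈
        (loewy R B (α + 1)).map (loewy R B α).mkQ := by
    rintro - ⟨x, hx, rfl⟩
    rw [loewy_eq_comap_of_injective hf] at hx
    exact ⟨f x, hx, rfl⟩
  refine ⟨_, (LinearMap.injective_restrict_iff hmaps).2 ?_⟩
  rw [LinearMap.ker_eq_bot.2 hg]
  exact disjoint_bot_right

lemma IsLayerProjective.of_injective {f : A →ₗ[R] B} (hf : Function.Injective f)
    (hB : IsLayerProjective R B) : IsLayerProjective R A := by
  intro α hα T hT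
  obtain ⟨g, hg⟩ := exists_injective_loewy_layer_map hf α
  obtain ⟨T', hT', ⟨e⟩⟩ := hB α hα (T.map g) (isAtom_map_of_injective hg hT)
  exact ⟨T', hT', ⟨(Submodule.equivMapOfInjective g hg T).trans e⟩⟩

end Loewy

theorem isLayerProjective_submodule_general
    (R : Type u) [Ring R]
    (M : Type u) [AddCommGroup M] [Module R M]
    (hM : IsLayerProjective R M) (N : Submodule R M) :
    IsLayerProjective R N :=
  hM.of_injective N.injective_subtype

/-- Over a semiartinian von Neumann regular ring with primitive factors artinian, the class of
layer projective modules is closed under submodules. -/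
theorem isLayerProjective_submodule
    (R : Type u) [Ring R] (hsa : IsSemiartinianRing R)
    (hvnr : IsVonNeumannRegularRing R) (hpfa : HasPrimitiveFactorsArtinian R)
    (M : Type u) [AddCommGroup M] [Module R M]
    (hM : IsLayerProjective R M) (N : Submodule R M) :
    IsLayerProjective R N :=
  isLayerProjective_submodule_general R M hM N
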